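/- (Vizing's Adjacency Lemma) Let G be a Class 2 simple graph with maximum degree Δ. If e = xy is a critical edge of G, then x has at least Δ − d_G(y) + 1 neighbors of degree Δ in V(G) ∖ {y}. -/

import Mathlib

/-- `c` is a proper edge coloring of `G` using colors in `{1, …, k}`:
every edge gets a color in `[1,k]`, and distinct edges sharing an endpoint
get distinct colors. -/
def IsEdgeColoring {V : Type*} (G : SimpleGraph V) (k : ℕ) (c : Sym2 V → ℕ) : Prop :=
  (∀ e ∈ G.edgeSet, 1 ≤ c e ∧ c e ≤ k) ∧
    ∀ e ∈ G.edgeSet, ∀ f ∈ G.edgeSet, e ≠ f → (∃ v, v ∈ e ∧ v ∈ f) → c e ≠ c f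

/-- The chromatic index `χ'(G)`: the least `k` admitting a proper edge `k`-coloring. -/
noncomputable def chromIndex {V : Type*} (G : SimpleGraph V) : ℕ :=
  sInf {k | ∃ c, IsEdgeColoring G k c}

/-- An edge `e` of `G` is critical if `χ'(G-e) < χ'(G)`. -/
def IsCriticalEdge {V : Type*} (G : SimpleGraph V) (e : Sym2 V) : Prop :=
  e ∈ G.edgeSet ∧ chromIndex (G.deleteEdges {e}) < chromIndex G

/-- The set of colors of `[1,k]` missing at `v` under the coloring `c` of `G`. -/
def missingColors {V : Type*} (G : SimpleGraph V) (k : ℕ) (c : Sym2 V → ℕ) (v : V) : Set ℕ :=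
  {α | 1 ≤ α ∧ α ≤ k ∧ ∀ e ∈ G.edgeSet, v ∈ e → c e ≠ α}

/-- `G` is `Δ`-critical: `Δ` is the maximum degree of `G`, `χ'(G) = Δ+1`, and every
proper subgraph has chromatic index less than `Δ+1`. -/
def IsDeltaCritical {V : Type*} [Fintype V] (G : SimpleGraph V) [DecidableRel G.Adj]
    (Δ : ℕ) : Prop :=
  G.maxDegree = Δ ∧ chromIndex G = Δ + 1 ∧
    ∀ H : SimpleGraph V, H ≤ G → H ≠ G → chromIndex H < Δ + 1

/-- A Kierstead path `(v₀, v₀v₁, v₁, …, v_{p-1}v_p, v_p)` with respect to the edge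
`v₀v₁` and a `k`-coloring `c` of `G - v₀v₁`, encoded by the list `P = [v₀, …, v_p]`. -/
structure IsKiersteadPath {V : Type*} (G : SimpleGraph V) (k : ℕ) (c : Sym2 V → ℕ)
    (P : List V) : Prop where
  two_le : 2 ≤ P.length
  nodup : P.Nodup
  adj : ∀ (i : ℕ) (h : i + 1 < P.length), G.Adj (P[i]'(by omega)) (P[i+1]'h)
  color : ∀ (i : ℕ) (h : i + 1 < P.length), 1 ≤ i →
      ∃ (j : ℕ) (_ : j ≤ i),
        c (Sym2.mk (P[i]'(by omega)) (P[i+1]'h)) ∈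
          missingColors (G.deleteEdges {Sym2.mk (P[0]'(by omega)) (P[1]'(by omega))}) k c
            (P[j]'(by omega))

/-- A multifan centered at `r` with respect to the edge `r s₁` and a `k`-coloring `c` of
`G - r s₁`, encoded by `r` and the list `sl = [s₁, …, s_p]`. -/
structure IsMultifan {V : Type*} (G : SimpleGraph V) (k : ℕ) (c : Sym2 V → ℕ)
    (r : V) (sl : List V) : Prop where
  one_le : 1 ≤ sl.length
  nodup : (r :: sl).Nodup
  adj : ∀ (i : ℕ) (h : i < sl.length), G.Adj r (sl[i]'h)
  color : ∀ (i : ℕ) (h : i < sl.length), 1 ≤ i →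
      ∃ (j : ℕ) (_ : j < i),
        c (Sym2.mk r (sl[i]'h)) ∈
          missingColors (G.deleteEdges {Sym2.mk r (sl[0]'(by omega))}) k c
            (sl[j]'(by omega))

/-- The subgraph of `G` whose edges are the edges colored `α` or `β` by `c`;
its components are the `(α,β)`-chains. -/
def chainGraph {V : Type*} (G : SimpleGraph V) (c : Sym2 V → ℕ) (α β : ℕ) :
    SimpleGraph V where
  Adj x y := G.Adj x y ∧ (c (Sym2.mk x y) = α ∨ c (Sym2.mk x y) = β)
  symm := ⟨by
    intro x y hxy
    refine ⟨hxy.1.symm, ?_⟩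
    rw [Sym2.eq_swap]
    exact hxy.2⟩
  loopless := ⟨fun x hx => G.loopless.irrefl x hx.1⟩

/-- `x` and `y` are `(α,β)`-linked with respect to the coloring `c` of `G`:
they belong to the same `(α,β)`-chain. -/
def Linked {V : Type*} (G : SimpleGraph V) (c : Sym2 V → ℕ) (α β : ℕ) (x y : V) : Prop :=
  (chainGraph G c α β).Reachable x y

/-!
Color `G - xy` with `Δ` colors (possible since `xy` is critical) and take a maximal multifan at
`x` starting with `y`. Vizing's fan lemma says that a color missing at `x` is missing at no
vertex of the multifan (else recolor the fan edges down to `y` and color `xy`), that the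
vertices of the multifan miss pairwise disjoint sets of colors (two of them missing `α` would
both be joined to `x` by an `(α,γ)`-Kempe chain, a path with only two ends), and, by
maximality, that each of these missing colors sits on one of the `p - 1` edges from `x` to the
multifan other than `xy`. So at most `p - 1` colors are missing on the multifan in total. The
vertex `y` alone misses at least `Δ - d(y) + 1` of them and every other vertex of degree less
than `Δ` misses at least one, so at least `Δ - d(y) + 1` neighbors of `x` other than `y` in the
multifan have degree `Δ`.
-/

open SimpleGraph Finset

section

variable {V : Type*}

section EdgeColoring

variable {H H' : SimpleGraph V} {k : ℕ} {c : Sym2 V → ℕ}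

lemma IsEdgeColoring.anti (hle : H ≤ H') (hc : IsEdgeColoring H' k c) : IsEdgeColoring H k c :=
  ⟨fun e he => hc.1 e (edgeSet_mono hle he),
    fun e he f hf => hc.2 e (edgeSet_mono hle he) f (edgeSet_mono hle hf)⟩

lemma missingColors_anti (hle : H ≤ H') (v : V) :
    missingColors H' k c v ⊆ missingColors H k c v :=
  fun _ ⟨h₁, h₂, h₃⟩ => ⟨h₁, h₂, fun e he => h₃ e (edgeSet_mono hle he)⟩

lemma chromIndex_le (hc : IsEdgeColoring H k c) : chromIndex H ≤ k :=
  Nat.sInf_le ⟨c, hc⟩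

lemma exists_isEdgeColoring_of_chromIndex_le [Finite V] (h : chromIndex H ≤ k) :
    ∃ c, IsEdgeColoring H k c := by
  obtain ⟨n, ⟨f⟩⟩ := Finite.exists_equiv_fin (Sym2 V)
  have hne : {k | ∃ c, IsEdgeColoring H k c}.Nonempty :=
    ⟨n, fun e => f e + 1, fun e _ => ⟨Nat.succ_pos _, (f e).isLt⟩,
      fun e _ e' _ hne _ h => hne (f.injective (Fin.ext (Nat.succ_injective h)))⟩
  obtain ⟨c, hc⟩ := Nat.sInf_mem hne
  exact ⟨c, fun e he => ⟨(hc.1 e he).1, (hc.1 e he).2.trans h⟩, hc.2⟩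

lemma exists_isEdgeColoring_deleteEdges_of_isCriticalEdge [Finite V] {G : SimpleGraph V}
    {e : Sym2 V} (hG : chromIndex G ≤ k + 1) (he : IsCriticalEdge G e) :
    ∃ c, IsEdgeColoring (G.deleteEdges {e}) k c :=
  exists_isEdgeColoring_of_chromIndex_le (by have := he.2; omega)

lemma IsEdgeColoring.eq_of_color_eq (hc : IsEdgeColoring H k c) {v w₁ w₂ : V}
    (h₁ : H.Adj v w₁) (h₂ : H.Adj v w₂) (h : c s(v, w₁) = c s(v, w₂)) :
    w₁ = w₂ := by
  by_contra hne
  exact hc.2 _ h₁ _ h₂ (fun he => hne (Sym2.congr_right.1 he))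
    ⟨v, Sym2.mem_mk_left _ _, Sym2.mem_mk_left _ _⟩ h

variable [DecidableEq V]

lemma IsEdgeColoring.update_of_mem_missingColors {a b : V} {β : ℕ}
    (hc : IsEdgeColoring (H.deleteEdges {s(a, b)}) k c)
    (ha : β ∈ missingColors (H.deleteEdges {s(a, b)}) k c a)
    (hb : β ∈ missingColors (H.deleteEdges {s(a, b)}) k c b) :
    IsEdgeColoring H k (Function.update c s(a, b) β) := by
  have hold : ∀ e ∈ H.edgeSet, e ≠ s(a, b) → e ∈ (H.deleteEdges {s(a, b)}).edgeSet :=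
    fun e he hne => by simp [edgeSet_deleteEdges, he, hne]
  have hβ : ∀ f ∈ H.edgeSet, f ≠ s(a, b) → ∀ v ∈ s(a, b), v ∈ f → c f ≠ β := by
    rintro f hf hne v hv hvf
    rcases Sym2.mem_iff.1 hv with rfl | rfl
    exacts [ha.2.2 f (hold f hf hne) hvf, hb.2.2 f (hold f hf hne) hvf]
  refine ⟨fun e he => ?_, fun e he f hf hef ⟨v, hve, hvf⟩ => ?_⟩
  · by_cases h : e = s(a, b)
    · subst h
      simpa using ⟨ha.1, ha.2.1⟩
    · rw [Function.update_of_ne h]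
      exact hc.1 e (hold e he h)
  · by_cases h₁ : e = s(a, b) <;> by_cases h₂ : f = s(a, b)
    · exact absurd (h₁.trans h₂.symm) hef
    · subst h₁
      rw [Function.update_self, Function.update_of_ne h₂]
      exact (hβ f hf h₂ v hve hvf).symm
    · subst h₂
      rw [Function.update_self, Function.update_of_ne h₁]
      exact hβ e he h₁ v hvf hve
    · rw [Function.update_of_ne h₁, Function.update_of_ne h₂]
      exact hc.2 e (hold e he h₁) f (hold f hf h₂) hef ⟨v, hve, hvf⟩

lemma missingColors_update_of_notMem {e : Sym2 V} {v : V} (hv : v ∉ e) (β : ℕ) :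
    missingColors H k (Function.update c e β) v = missingColors H k c v := by
  ext α
  refine and_congr_right' (and_congr_right' (forall₂_congr fun f _ =>
    forall_congr' fun hvf => ?_))
  rw [Function.update_of_ne (by rintro rfl; exact hv hvf)]

lemma IsEdgeColoring.mem_missingColors_update (hc : IsEdgeColoring H k c) {e : Sym2 V}
    (he : e ∈ H.edgeSet) {v : V} (hve : v ∈ e) {β : ℕ} (hβ : β ∈ missingColors H k c v) :
    c e ∈ missingColors H k (Function.update c e β) v := by
  refine ⟨(hc.1 e he).1, (hc.1 e he).2, fun f hf hvf => ?_⟩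
  by_cases hfe : f = e
  · subst hfe
    rw [Function.update_self]
    exact (hβ.2.2 f hf hvf).symm
  · rw [Function.update_of_ne hfe]
    exact hc.2 f hf e he hfe ⟨v, hvf, hve⟩

end EdgeColoring

section KempeChain

variable {H : SimpleGraph V} {k : ℕ} {c : Sym2 V → ℕ} {α γ : ℕ} {u v : V}

lemma chainGraph_adj {w : V} :
    (chainGraph H c α γ).Adj v w ↔ H.Adj v w ∧ (c s(v, w) = α ∨ c s(v, w) = γ) :=
  Iff.rfl

lemma chainGraph_comm : chainGraph H c α γ = chainGraph H c γ α := by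
  ext v w
  simp only [chainGraph_adj, or_comm]

/-- The Kempe change at `u`. Since `Equiv.swap α γ` fixes every other color, only the edges of
the `(α,γ)`-chain through `u` change color. -/
noncomputable def kempeSwap (H : SimpleGraph V) (c : Sym2 V → ℕ) (α γ : ℕ) (u : V)
    (e : Sym2 V) : ℕ :=
  open Classical in
  if ∃ v ∈ e, Linked H c α γ u v then Equiv.swap α γ (c e) else c e

lemma kempeSwap_of_linked (h : Linked H c α γ u v) {e : Sym2 V} (hv : v ∈ e) :
    kempeSwap H c α γ u e = Equiv.swap α γ (c e) :=
  if_pos ⟨v, hv, h⟩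

/-- Were such an edge colored `α` or `γ`, it would put `v` on the chain. -/
lemma kempeSwap_of_not_linked (h : ¬ Linked H c α γ u v) {e : Sym2 V} (he : e ∈ H.edgeSet)
    (hv : v ∈ e) : kempeSwap H c α γ u e = c e := by
  obtain ⟨w, rfl⟩ := Sym2.mem_iff_exists.1 hv
  unfold kempeSwap
  split_ifs with hlink
  · obtain ⟨w', hw', hlw'⟩ := hlink
    rcases Sym2.mem_iff.1 hw' with rfl | rfl
    · exact absurd hlw' h
    · by_cases hcol : c s(v, w') = α ∨ c s(v, w') = γ
      · exact absurd (hlw'.trans (Adj.reachable ⟨(H.mem_edgeSet.1 he).symm,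
          by rwa [Sym2.eq_swap]⟩)) h
      · rw [not_or] at hcol
        exact Equiv.swap_apply_of_ne_of_ne hcol.1 hcol.2
  · rfl

lemma swap_mem_Icc_iff {k α γ n : ℕ} (hα : α ∈ Set.Icc 1 k) (hγ : γ ∈ Set.Icc 1 k) :
    Equiv.swap α γ n ∈ Set.Icc 1 k ↔ n ∈ Set.Icc 1 k := by
  rw [Equiv.swap_apply_def]
  split_ifs with h₁ h₂
  · simp only [h₁, hα, hγ]
  · simp only [h₂, hα, hγ]
  · rfl

lemma IsEdgeColoring.kempeSwap (hc : IsEdgeColoring H k c) (hα : α ∈ Set.Icc 1 k)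
    (hγ : γ ∈ Set.Icc 1 k) (u : V) : IsEdgeColoring H k (kempeSwap H c α γ u) := by
  refine ⟨fun e he => ?_, fun e he f hf hef ⟨v, hve, hvf⟩ => ?_⟩
  · unfold _root_.kempeSwap
    split_ifs
    · exact (swap_mem_Icc_iff hα hγ).2 (hc.1 e he)
    · exact hc.1 e he
  · by_cases h : Linked H c α γ u v
    · rw [kempeSwap_of_linked h hve, kempeSwap_of_linked h hvf]
      exact (Equiv.swap α γ).injective.ne (hc.2 e he f hf hef ⟨v, hve, hvf⟩)
    · rw [kempeSwap_of_not_linked h he hve, kempeSwap_of_not_linked h hf hvf]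
      exact hc.2 e he f hf hef ⟨v, hve, hvf⟩

lemma missingColors_kempeSwap_of_not_linked (h : ¬ Linked H c α γ u v) :
    missingColors H k (kempeSwap H c α γ u) v = missingColors H k c v := by
  ext β
  refine and_congr_right' (and_congr_right' (forall₂_congr fun e he =>
    forall_congr' fun hve => ?_))
  rw [kempeSwap_of_not_linked h he hve]

lemma mem_missingColors_kempeSwap_of_linked (hα : α ∈ Set.Icc 1 k) (hγ : γ ∈ Set.Icc 1 k)
    (h : Linked H c α γ u v) {β : ℕ} :
    β ∈ missingColors H k (kempeSwap H c α γ u) v ↔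
      Equiv.swap α γ β ∈ missingColors H k c v := by
  have hIcc := swap_mem_Icc_iff (n := β) hα hγ
  simp only [missingColors, Set.mem_ofPred_eq, Set.mem_Icc] at hIcc ⊢
  rw [← and_assoc, ← and_assoc, ← hIcc]
  refine and_congr_right' (forall₂_congr fun e _ => forall_congr' fun hve => ?_)
  rw [kempeSwap_of_linked h hve, Ne, Equiv.swap_apply_eq_iff]

lemma IsEdgeColoring.chainGraph_adj_three (hc : IsEdgeColoring H k c) {w₁ w₂ w₃ : V}
    (h₁ : (chainGraph H c α γ).Adj v w₁) (h₂ : (chainGraph H c α γ).Adj v w₂)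
    (h₃ : (chainGraph H c α γ).Adj v w₃) : w₁ = w₂ ∨ w₁ = w₃ ∨ w₂ = w₃ := by
  have := h₁.2; have := h₂.2; have := h₃.2
  have hcol : c s(v, w₁) = c s(v, w₂) ∨ c s(v, w₁) = c s(v, w₃) ∨
      c s(v, w₂) = c s(v, w₃) := by
    omega
  rcases hcol with h | h | h
  exacts [.inl (hc.eq_of_color_eq h₁.1 h₂.1 h), .inr (.inl (hc.eq_of_color_eq h₁.1 h₃.1 h)),
    .inr (.inr (hc.eq_of_color_eq h₂.1 h₃.1 h))]

lemma IsEdgeColoring.neighborSet_chainGraph_subsingleton (hc : IsEdgeColoring H k c)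
    (hv : α ∈ missingColors H k c v) : ((chainGraph H c α γ).neighborSet v).Subsingleton := by
  have hγ : ∀ w, (chainGraph H c α γ).Adj v w → c s(v, w) = γ := fun w hw =>
    hw.2.resolve_left (hv.2.2 _ hw.1 (Sym2.mem_mk_left _ _))
  exact fun w₁ h₁ w₂ h₂ =>
    hc.eq_of_color_eq h₁.1 h₂.1 ((hγ w₁ h₁).trans (hγ w₂ h₂).symm)

end KempeChain

namespace SimpleGraph

variable {H : SimpleGraph V}

lemma Walk.IsPath.getVert_pred_ne_getVert_succ {a b : V} {q : H.Walk a b} (hq : q.IsPath)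
    {i : ℕ} (hi₀ : 0 < i) (hi : i < q.length) : q.getVert (i - 1) ≠ q.getVert (i + 1) := by
  intro h
  have := hq.getVert_injOn (by simp only [Set.mem_ofPred_eq]; omega)
    (by simp only [Set.mem_ofPred_eq]; omega) h
  omega

lemma Walk.adj_getVert_pred {a b : V} (q : H.Walk a b) {i : ℕ} (hi₀ : 0 < i)
    (hi : i ≤ q.length) : H.Adj (q.getVert i) (q.getVert (i - 1)) := by
  have := q.adj_getVert_succ (i := i - 1) (by omega)
  rw [Nat.sub_add_cancel hi₀] at this
  exact this.symm

lemma Walk.IsPath.mem_support_of_adj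
    (hdeg : ∀ v w₁ w₂ w₃, H.Adj v w₁ → H.Adj v w₂ → H.Adj v w₃ →
      w₁ = w₂ ∨ w₁ = w₃ ∨ w₂ = w₃)
    {a b : V} {q : H.Walk a b} (hq : q.IsPath) (hab : a ≠ b)
    (ha : (H.neighborSet a).Subsingleton) (hb : (H.neighborSet b).Subsingleton) {v w : V}
    (hv : v ∈ q.support) (hvw : H.Adj v w) : w ∈ q.support := by
  obtain ⟨i, rfl, hi⟩ := Walk.mem_support_iff_exists_getVert.1 hv
  have hlen : 0 < q.length := Walk.not_nil_iff_lt_length.1 fun hnil => hab hnil.eq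
  rcases Nat.eq_zero_or_pos i with rfl | hi₀
  · rw [Walk.getVert_zero] at hvw
    have hsnd := q.adj_getVert_succ hlen
    rw [Walk.getVert_zero] at hsnd
    exact ha hvw hsnd ▸ q.getVert_mem_support 1
  rcases hi.eq_or_lt with rfl | hi
  · rw [Walk.getVert_length] at hvw
    have hpen := q.adj_getVert_pred hlen le_rfl
    rw [Walk.getVert_length] at hpen
    exact hb hvw hpen ▸ q.getVert_mem_support _
  · rcases hdeg _ w _ _ hvw (q.adj_getVert_pred hi₀ hi.le) (q.adj_getVert_succ hi) with
      h | h | h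
    · exact h ▸ q.getVert_mem_support _
    · exact h ▸ q.getVert_mem_support _
    · exact absurd h (hq.getVert_pred_ne_getVert_succ hi₀ hi)

/-- A path whose ends have degree at most one is then a whole component, and any other vertex on
it has two neighbors. -/
lemma eq_of_reachable_of_neighborSet_subsingleton
    (hdeg : ∀ v w₁ w₂ w₃, H.Adj v w₁ → H.Adj v w₂ → H.Adj v w₃ →
      w₁ = w₂ ∨ w₁ = w₃ ∨ w₂ = w₃) {a u w : V}
    (ha : (H.neighborSet a).Subsingleton) (hu : (H.neighborSet u).Subsingleton)
    (hw : (H.neighborSet w).Subsingleton) (hau : H.Reachable a u) (haw : H.Reachable a w)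
    (hua : u ≠ a) (hwa : w ≠ a) : u = w := by
  classical
  by_contra huw
  obtain ⟨q, hq⟩ := haw.some.toPath
  have hclosed : ∀ {s t : V} (p : H.Walk s t), s ∈ q.support → t ∈ q.support := by
    intro s t p
    induction p with
    | nil => exact id
    | cons h _ ih => exact fun hs => ih (hq.mem_support_of_adj hdeg hwa.symm ha hw hs h)
  obtain ⟨i, rfl, hi⟩ :=
    Walk.mem_support_iff_exists_getVert.1 (hclosed hau.some q.start_mem_support)
  have hi₀ : 0 < i := Nat.pos_of_ne_zero fun h => hua (by rw [h, Walk.getVert_zero])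
  have hi : i < q.length := hi.lt_of_ne fun h => huw (by rw [h, Walk.getVert_length])
  exact hq.getVert_pred_ne_getVert_succ hi₀ hi
    (hu (q.adj_getVert_pred hi₀ hi.le) (q.adj_getVert_succ hi))

end SimpleGraph

lemma List.getElem_cons_take {α : Type*} {a : α} {l : List α} {n i : ℕ}
    (hi : i < (a :: l.take n).length) :
    (a :: l.take n)[i] = (a :: l)[i]'(by simp at hi ⊢; omega) := by
  rcases i with _ | i <;> simp

section Multifan

variable {G : SimpleGraph V} {k : ℕ} {c c' : Sym2 V → ℕ} {x y : V} {ts : List V}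

lemma isMultifan_singleton (h : G.Adj x y) : IsMultifan G k c x [y] :=
  ⟨le_rfl, by simpa using h.ne, fun i hi => by simp_all, fun i hi h1 => by simp at hi; omega⟩

namespace IsMultifan

lemma getElem_ne_center (hf : IsMultifan G k c x ts) {i : ℕ} (hi : i < ts.length) :
    ts[i] ≠ x :=
  fun h => (List.nodup_cons.1 hf.nodup).1 (h ▸ List.getElem_mem hi)

lemma adj_of_mem (hf : IsMultifan G k c x ts) {v : V} (hv : v ∈ ts) : G.Adj x v := by
  obtain ⟨i, hi, rfl⟩ := List.getElem_of_mem hv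
  exact hf.adj i hi

lemma notMem_tail (hf : IsMultifan G k c x (y :: ts)) : y ∉ ts :=
  (List.nodup_cons.1 (List.nodup_cons.1 hf.nodup).2).1

lemma getElem_inj (hf : IsMultifan G k c x ts) {i j : ℕ} (hi : i < ts.length)
    (hj : j < ts.length) (h : ts[i] = ts[j]) : i = j :=
  ((List.nodup_cons.1 hf.nodup).2.getElem_inj_iff).1 h

lemma adj_deleteEdges (hf : IsMultifan G k c x (y :: ts)) {i : ℕ} (hi : i < (y :: ts).length)
    (hi₀ : 0 < i) : (G.deleteEdges {s(x, y)}).Adj x (y :: ts)[i] := by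
  refine (SimpleGraph.deleteEdges_adj ..).2 ⟨hf.adj i hi, fun h => ?_⟩
  have hy : (y :: ts)[i] = (y :: ts)[0] := by
    rcases Sym2.eq_iff.1 (Set.mem_singleton_iff.1 h) with ⟨-, h⟩ | ⟨-, h⟩
    · exact h
    · exact absurd h (hf.getElem_ne_center hi)
  exact hi₀.ne' (hf.getElem_inj hi (by simp) hy)

lemma take_of_color (hf : IsMultifan G k c x (y :: ts)) (n : ℕ)
    (h : ∀ i (hi : i < (y :: ts).length), 0 < i → i ≤ n → ∀ j (hj : j < i),
      c s(x, (y :: ts)[i]) ∈ missingColors (G.deleteEdges {s(x, y)}) k c (y :: ts)[j] →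
      c' s(x, (y :: ts)[i]) ∈ missingColors (G.deleteEdges {s(x, y)}) k c' (y :: ts)[j]) :
    IsMultifan G k c' x (y :: ts.take n) := by
  have hget : ∀ i (hi : i < (y :: ts.take n).length), (y :: ts.take n)[i] = _ :=
    fun i hi => List.getElem_cons_take hi
  refine ⟨by simp, hf.nodup.sublist (((List.take_sublist n ts).cons_cons y).cons_cons x),
    fun i hi => ?_, fun i hi hi₀ => ?_⟩
  · rw [hget]
    exact hf.adj i _
  · have hin : i ≤ n := by simp at hi; omega
    obtain ⟨j, hj, hmem⟩ := hf.color i (by simp at hi ⊢; omega) hi₀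
    refine ⟨j, hj, ?_⟩
    simp only [hget]
    exact h i _ hi₀ hin j hj hmem

lemma concat (hf : IsMultifan G k c x (y :: ts)) {z : V} (hz : G.Adj x z)
    (hzs : z ∉ y :: ts) {j : ℕ} (hj : j < (y :: ts).length)
    (hcol : c s(x, z) ∈ missingColors (G.deleteEdges {s(x, y)}) k c (y :: ts)[j]) :
    IsMultifan G k c x (y :: (ts ++ [z])) := by
  have hget : ∀ i (hi : i < (y :: ts).length),
      (y :: (ts ++ [z]))[i]'(by simp at hi ⊢; omega) = (y :: ts)[i] := fun i hi =>
    List.getElem_append_left (as := y :: ts) (bs := [z]) hi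
  have hlast : (y :: (ts ++ [z]))[ts.length + 1]'(by simp) = z :=
    List.getElem_concat_length (l := y :: ts) (by simp) _
  refine ⟨by simp, ?_, fun i hi => ?_, fun i hi hi₀ => ?_⟩
  · have := hf.nodup.concat (a := z) (by simpa [hz.ne'] using hzs)
    simpa using this
  · rcases Nat.lt_succ_iff_lt_or_eq.1 (by simpa using hi) with hi | rfl
    · rw [hget i hi]
      exact hf.adj i hi
    · rw [hlast]
      exact hz
  · rcases Nat.lt_succ_iff_lt_or_eq.1 (by simpa using hi) with hi | rfl
    · obtain ⟨l, hl, hmem⟩ := hf.color i hi hi₀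
      refine ⟨l, hl, ?_⟩
      rw [hget i hi, hget l (by simp; omega)]
      exact hmem
    · refine ⟨j, hj, ?_⟩
      rw [hlast, hget j hj]
      exact hcol

end IsMultifan

end Multifan

section VizingFan

variable {G : SimpleGraph V} {k : ℕ} {c : Sym2 V → ℕ} {x y : V} {ts : List V}

lemma exists_maximal_multifan [Fintype V] (h : G.Adj x y) :
    ∃ ts, IsMultifan G k c x (y :: ts) ∧
      ∀ ts', IsMultifan G k c x (y :: ts') → ts'.length ≤ ts.length := by
  classical
  let P : ℕ → Prop := fun n => ∃ ts : List V, ts.length = n ∧ IsMultifan G k c x (y :: ts)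
  have hbound : ∀ ts, IsMultifan G k c x (y :: ts) → ts.length ≤ Fintype.card V := by
    intro ts hf
    have := hf.nodup.length_le_card
    simp only [List.length_cons] at this
    omega
  obtain ⟨ts, hlen, hf⟩ :=
    Nat.findGreatest_spec (P := P) (Nat.zero_le _) ⟨[], rfl, isMultifan_singleton h⟩
  exact ⟨ts, hf, fun ts' hf' =>
    hlen ▸ Nat.le_findGreatest (hbound ts' hf') ⟨ts', rfl, hf'⟩⟩

namespace IsMultifan

lemma mem_of_maximal (hf : IsMultifan G k c x (y :: ts))
    (hmax : ∀ ts', IsMultifan G k c x (y :: ts') → ts'.length ≤ ts.length) {j : ℕ}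
    (hj : j < (y :: ts).length) {z : V} (hz : (G.deleteEdges {s(x, y)}).Adj x z)
    (hcol : c s(x, z) ∈ missingColors (G.deleteEdges {s(x, y)}) k c (y :: ts)[j]) :
    z ∈ ts := by
  obtain ⟨hxz, hzy⟩ := (SimpleGraph.deleteEdges_adj ..).1 hz
  by_contra hzts
  have hzs : z ∉ y :: ts := by
    rintro (_ | ⟨_, h⟩)
    · exact hzy rfl
    · exact hzts h
  have := hmax _ (hf.concat hxz hzs hj hcol)
  simp at this

variable [DecidableEq V]

/-- Otherwise recolor the edge from `x` to that vertex with the common missing color; its former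
color is now missing at `x` and at an earlier vertex of the multifan. Descending this way reaches
`y`, where the uncolored edge `xy` could be colored. -/
theorem disjoint_missingColors_center (hG : k < chromIndex G)
    (hc : IsEdgeColoring (G.deleteEdges {s(x, y)}) k c) (hf : IsMultifan G k c x (y :: ts))
    {i : ℕ} (hi : i < (y :: ts).length) :
    Disjoint (missingColors (G.deleteEdges {s(x, y)}) k c x)
      (missingColors (G.deleteEdges {s(x, y)}) k c (y :: ts)[i]) := by
  induction i using Nat.strong_induction_on generalizing c ts with
  | _ i ih =>
  refine Set.disjoint_left.2 fun β hβx hβi => ?_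
  rcases Nat.eq_zero_or_pos i with rfl | hi₀
  · exact hG.not_ge (chromIndex_le (hc.update_of_mem_missingColors hβx hβi))
  obtain ⟨j, hji, hδ⟩ := hf.color i hi hi₀
  set H := G.deleteEdges {s(x, y)}
  set e := s(x, (y :: ts)[i])
  have he : e ∈ H.edgeSet := hf.adj_deleteEdges hi hi₀
  have hnotMem : ∀ l (hl : l < (y :: ts).length), l ≠ i → (y :: ts)[l] ∉ e := by
    intro l hl hli hmem
    rcases Sym2.mem_iff.1 hmem with h | h
    exacts [hf.getElem_ne_center hl h, hli (hf.getElem_inj hl hi h)]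
  have hc' : IsEdgeColoring H k (Function.update c e β) :=
    (hc.anti (deleteEdges_le _)).update_of_mem_missingColors
      (missingColors_anti (deleteEdges_le _) _ hβx) (missingColors_anti (deleteEdges_le _) _ hβi)
  have hf' : IsMultifan G k (Function.update c e β) x (y :: ts.take (i - 1)) := by
    refine hf.take_of_color (i - 1) fun m hm _ hmi l hl hmem => ?_
    have hme : s(x, (y :: ts)[m]) ≠ e := fun h =>
      (by omega : m ≠ i) (hf.getElem_inj hm hi (Sym2.congr_right.1 h))
    rw [Function.update_of_ne hme, missingColors_update_of_notMem (hnotMem l _ (by omega))]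
    exact hmem
  have hj' : j < (y :: ts.take (i - 1)).length := by simp at hi ⊢; omega
  have := ih j hji hc' hf' hj'
  rw [List.getElem_cons_take] at this
  exact Set.disjoint_left.1 this (hc.mem_missingColors_update he (Sym2.mem_mk_left _ _) hβx)
    (by rwa [missingColors_update_of_notMem (hnotMem j _ (by omega))])

/-- Otherwise swap the `(α,γ)`-chain at that vertex: `γ` is then missing at both it and `x`.
By induction the chains through earlier vertices missing `α` end at `x`, so they are untouched
and the prefix up to that vertex stays a multifan, against `disjoint_missingColors_center`. -/
theorem linked_of_mem_missingColors (hG : k < chromIndex G)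
    (hc : IsEdgeColoring (G.deleteEdges {s(x, y)}) k c) (hf : IsMultifan G k c x (y :: ts))
    {α γ : ℕ} (hγ : γ ∈ missingColors (G.deleteEdges {s(x, y)}) k c x) {i : ℕ}
    (hi : i < (y :: ts).length)
    (hα : α ∈ missingColors (G.deleteEdges {s(x, y)}) k c (y :: ts)[i]) :
    Linked (G.deleteEdges {s(x, y)}) c α γ x (y :: ts)[i] := by
  induction i using Nat.strong_induction_on with
  | _ i ih =>
  by_contra hxu
  set H := G.deleteEdges {s(x, y)}
  set u := (y :: ts)[i]
  have hux : ¬ Linked H c α γ u x := fun h => hxu h.symm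
  have hαk : α ∈ Set.Icc 1 k := ⟨hα.1, hα.2.1⟩
  have hγk : γ ∈ Set.Icc 1 k := ⟨hγ.1, hγ.2.1⟩
  have hx₂ : γ ∈ missingColors H k (kempeSwap H c α γ u) x := by
    rwa [missingColors_kempeSwap_of_not_linked hux]
  have hu₂ : γ ∈ missingColors H k (kempeSwap H c α γ u) u := by
    rwa [mem_missingColors_kempeSwap_of_linked hαk hγk (Reachable.refl _),
      Equiv.swap_apply_right]
  have hf₂ : IsMultifan G k (kempeSwap H c α γ u) x (y :: ts.take i) := by
    refine hf.take_of_color i fun m hm hm₀ hmi l hl hmem => ?_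
    rw [kempeSwap_of_not_linked hux (hf.adj_deleteEdges hm hm₀) (Sym2.mem_mk_left _ _)]
    by_cases hlu : Linked H c α γ u (y :: ts)[l]
    · have hδγ : c s(x, (y :: ts)[m]) ≠ γ := fun h => Set.disjoint_left.1
        (hf.disjoint_missingColors_center hG hc (i := l) (by omega)) hγ (h ▸ hmem)
      have hδα : c s(x, (y :: ts)[m]) ≠ α := fun h =>
        hxu ((ih l (by omega) (by omega) (h ▸ hmem)).trans hlu.symm)
      rwa [mem_missingColors_kempeSwap_of_linked hαk hγk hlu,
        Equiv.swap_apply_of_ne_of_ne hδα hδγ]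
    · rwa [missingColors_kempeSwap_of_not_linked hlu]
  have hi' : i < (y :: ts.take i).length := by simp at hi ⊢; omega
  have := hf₂.disjoint_missingColors_center hG (hc.kempeSwap hαk hγk u) hi'
  rw [List.getElem_cons_take] at this
  exact Set.disjoint_left.1 this hx₂ hu₂

/-- Two vertices missing `α` would both be `(α,γ)`-linked to `x`, but the chain is a path with
only two ends. -/
theorem disjoint_missingColors (hG : k < chromIndex G)
    (hc : IsEdgeColoring (G.deleteEdges {s(x, y)}) k c) (hf : IsMultifan G k c x (y :: ts))
    (hx : (missingColors (G.deleteEdges {s(x, y)}) k c x).Nonempty) {i j : ℕ}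
    (hi : i < (y :: ts).length) (hj : j < (y :: ts).length) (hij : i ≠ j) :
    Disjoint (missingColors (G.deleteEdges {s(x, y)}) k c (y :: ts)[i])
      (missingColors (G.deleteEdges {s(x, y)}) k c (y :: ts)[j]) := by
  obtain ⟨γ, hγ⟩ := hx
  refine Set.disjoint_left.2 fun α hαi hαj => hij (hf.getElem_inj hi hj ?_)
  have hxγ := hc.neighborSet_chainGraph_subsingleton (γ := α) hγ
  rw [chainGraph_comm] at hxγ
  exact eq_of_reachable_of_neighborSet_subsingleton (fun _ _ _ _ => hc.chainGraph_adj_three)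
    hxγ (hc.neighborSet_chainGraph_subsingleton hαi) (hc.neighborSet_chainGraph_subsingleton hαj)
    (hf.linked_of_mem_missingColors hG hc hγ hi hαi)
    (hf.linked_of_mem_missingColors hG hc hγ hj hαj)
    (hf.getElem_ne_center hi) (hf.getElem_ne_center hj)

end IsMultifan

end VizingFan

section Counting

variable {H : SimpleGraph V} {k : ℕ} {c : Sym2 V → ℕ} {v : V}

open Classical in
noncomputable def missingColorFinset (H : SimpleGraph V) (k : ℕ) (c : Sym2 V → ℕ) (v : V) :
    Finset ℕ :=
  {β ∈ Finset.Icc 1 k | β ∈ missingColors H k c v}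

@[simp]
lemma coe_missingColorFinset :
    (missingColorFinset H k c v : Set ℕ) = missingColors H k c v := by
  ext β
  simp only [missingColorFinset, coe_filter, Finset.mem_Icc, Set.mem_ofPred_eq]
  exact ⟨fun h => h.2, fun h => ⟨⟨h.1, h.2.1⟩, h⟩⟩

lemma sub_card_le_card_missingColorFinset {N : Finset V} (hN : ∀ w, H.Adj v w → w ∈ N) :
    k - #N ≤ #(missingColorFinset H k c v) := by
  have hsub : Finset.Icc 1 k \ N.image (fun w => c s(v, w)) ⊆ missingColorFinset H k c v := by
    intro β hβ
    obtain ⟨hβk, hβN⟩ := Finset.mem_sdiff.1 hβ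
    rw [← Finset.mem_coe, coe_missingColorFinset]
    refine ⟨(Finset.mem_Icc.1 hβk).1, (Finset.mem_Icc.1 hβk).2, fun e he hve hce => ?_⟩
    obtain ⟨w, rfl⟩ := Sym2.mem_iff_exists.1 hve
    exact hβN (Finset.mem_image.2 ⟨w, hN w he, hce⟩)
  calc k - #N ≤ #(Finset.Icc 1 k) - #(N.image fun w => c s(v, w)) := by
        simp only [Nat.card_Icc, add_tsub_cancel_right]
        have := Finset.card_image_le (s := N) (f := fun w => c s(v, w))
        omega
    _ ≤ #(Finset.Icc 1 k \ N.image fun w => c s(v, w)) := Finset.le_card_sdiff _ _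
    _ ≤ _ := Finset.card_le_card hsub

lemma sub_degree_le_card_missingColorFinset {G : SimpleGraph V} [Fintype (G.neighborSet v)]
    (hle : H ≤ G) : k - G.degree v ≤ #(missingColorFinset H k c v) := by
  simpa using sub_card_le_card_missingColorFinset (k := k) (c := c)
    (N := G.neighborFinset v) fun w hw => (G.mem_neighborFinset v w).2 (hle hw)

lemma le_card_missingColorFinset_deleteEdges [DecidableEq V] {G : SimpleGraph V} {x y : V}
    [Fintype (G.neighborSet x)] (hxy : G.Adj x y) :
    k + 1 - G.degree x ≤ #(missingColorFinset (G.deleteEdges {s(x, y)}) k c x) := by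
  have hN : ∀ w, (G.deleteEdges {s(x, y)}).Adj x w → w ∈ (G.neighborFinset x).erase y := by
    intro w hw
    obtain ⟨hxw, hne⟩ := (SimpleGraph.deleteEdges_adj ..).1 hw
    exact Finset.mem_erase.2 ⟨fun h => hne (h ▸ rfl), (G.mem_neighborFinset x w).2 hxw⟩
  have hcard : #((G.neighborFinset x).erase y) = G.degree x - 1 := by
    rw [Finset.card_erase_of_mem ((G.mem_neighborFinset x y).2 hxy), card_neighborFinset_eq_degree]
  have hpos : 0 < G.degree x := G.degree_pos_iff_exists_adj x |>.2 ⟨y, hxy⟩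
  have := sub_card_le_card_missingColorFinset (k := k) (c := c) hN
  omega

lemma le_card_filter_of_sum_le {ι : Type*} [DecidableEq ι] {T : Finset ι} {a : ι} (ha : a ∉ T)
    (m : ι → ℕ) (P : ι → Prop) [DecidablePred P] (hsum : ∑ i ∈ insert a T, m i ≤ #T)
    (hpos : ∀ i ∈ T, ¬ P i → 1 ≤ m i) : m a ≤ #(T.filter P) := by
  rw [Finset.sum_insert ha] at hsum
  have hnot : #(T.filter (¬ P ·)) ≤ ∑ i ∈ T, m i :=
    calc #(T.filter (¬ P ·)) = ∑ i ∈ T.filter (¬ P ·), 1 := Finset.card_eq_sum_ones _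
      _ ≤ ∑ i ∈ T.filter (¬ P ·), m i :=
        Finset.sum_le_sum fun i hi => hpos i (Finset.mem_filter.1 hi).1 (Finset.mem_filter.1 hi).2
      _ ≤ ∑ i ∈ T, m i := Finset.sum_le_sum_of_subset (Finset.filter_subset _ _)
  have := Finset.card_filter_add_card_filter_not (s := T) P
  omega

end Counting

namespace IsMultifan

variable [DecidableEq V] {G : SimpleGraph V} {k : ℕ} {c : Sym2 V → ℕ} {x y : V} {ts : List V}

/-- The missing sets are disjoint, and by maximality each missing color sits on an edge from `x`
to the multifan other than `xy`. -/
theorem sum_card_missingColorFinset_le (hG : k < chromIndex G)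
    (hc : IsEdgeColoring (G.deleteEdges {s(x, y)}) k c) (hf : IsMultifan G k c x (y :: ts))
    (hmax : ∀ ts', IsMultifan G k c x (y :: ts') → ts'.length ≤ ts.length)
    (hx : (missingColors (G.deleteEdges {s(x, y)}) k c x).Nonempty) :
    ∑ v ∈ (y :: ts).toFinset, #(missingColorFinset (G.deleteEdges {s(x, y)}) k c v) ≤
      #ts.toFinset := by
  set H := G.deleteEdges {s(x, y)}
  have hdisj : ((y :: ts).toFinset : Set V).PairwiseDisjoint (missingColorFinset H k c) := by
    intro v hv w hw hvw
    obtain ⟨i, hi, rfl⟩ := List.getElem_of_mem (List.mem_toFinset.1 hv)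
    obtain ⟨j, hj, rfl⟩ := List.getElem_of_mem (List.mem_toFinset.1 hw)
    rw [Function.onFun, ← Finset.disjoint_coe, coe_missingColorFinset, coe_missingColorFinset]
    exact hf.disjoint_missingColors hG hc hx hi hj fun h => hvw (h ▸ rfl)
  have hsub : (y :: ts).toFinset.biUnion (missingColorFinset H k c) ⊆
      ts.toFinset.image fun v => c s(x, v) := by
    intro β hβ
    obtain ⟨v, hv, hβv⟩ := Finset.mem_biUnion.1 hβ
    obtain ⟨i, hi, rfl⟩ := List.getElem_of_mem (List.mem_toFinset.1 hv)
    rw [← Finset.mem_coe, coe_missingColorFinset] at hβv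
    have hβx : β ∉ missingColors H k c x :=
      Set.disjoint_right.1 (hf.disjoint_missingColors_center hG hc hi) hβv
    simp only [missingColors, Set.mem_ofPred_eq, not_and, not_forall, not_not] at hβx
    obtain ⟨e, he, hxe, hce⟩ := hβx hβv.1 hβv.2.1
    obtain ⟨z, rfl⟩ := Sym2.mem_iff_exists.1 hxe
    exact Finset.mem_image.2
      ⟨z, List.mem_toFinset.2 (hf.mem_of_maximal hmax hi he (hce ▸ hβv)), hce⟩
  calc ∑ v ∈ (y :: ts).toFinset, #(missingColorFinset H k c v)
      = #((y :: ts).toFinset.biUnion (missingColorFinset H k c)) := (card_biUnion hdisj).symm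
    _ ≤ #(ts.toFinset.image fun v => c s(x, v)) := card_le_card hsub
    _ ≤ #ts.toFinset := card_image_le

theorem add_one_sub_degree_le_card_filter [Fintype V] [DecidableRel G.Adj]
    (hk : G.maxDegree ≤ k) (hG : k < chromIndex G)
    (hc : IsEdgeColoring (G.deleteEdges {s(x, y)}) k c) (hf : IsMultifan G k c x (y :: ts))
    (hmax : ∀ ts', IsMultifan G k c x (y :: ts') → ts'.length ≤ ts.length) :
    k + 1 - G.degree y ≤ #(ts.toFinset.filter fun v => G.degree v = k) := by
  have hxy : G.Adj x y := hf.adj 0 (by simp)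
  have hdeg : ∀ v, G.degree v ≤ k := fun v => (G.degree_le_maxDegree v).trans hk
  have hx : (missingColors (G.deleteEdges {s(x, y)}) k c x).Nonempty := by
    have := le_card_missingColorFinset_deleteEdges (k := k) (c := c) hxy
    rw [← coe_missingColorFinset, Finset.coe_nonempty, ← Finset.card_pos]
    have := hdeg x
    omega
  have hy := le_card_missingColorFinset_deleteEdges (k := k) (c := c) hxy.symm
  rw [Sym2.eq_swap] at hy
  have hsum := hf.sum_card_missingColorFinset_le hG hc hmax hx
  rw [List.toFinset_cons] at hsum
  refine hy.trans (le_card_filter_of_sum_le (by simpa using hf.notMem_tail) _ _ hsum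
    fun v _ hv => ?_)
  have := sub_degree_le_card_missingColorFinset (G := G) (k := k) (c := c)
    (deleteEdges_le {s(x, y)}) (v := v)
  have := hdeg v
  omega

end IsMultifan

end

theorem vizing_adjacency_lemma_general
    {V : Type*} [Fintype V] [DecidableEq V]
    (Δ : ℕ) (G : SimpleGraph V) [DecidableRel G.Adj]
    (hΔ : G.maxDegree = Δ) (hclass2 : chromIndex G = Δ + 1)
    (x y : V)
    (hcrit : IsCriticalEdge G (Sym2.mk x y)) :
    Δ - G.degree y + 1 ≤
      ((G.neighborFinset x).filter (fun z => z ≠ y ∧ G.degree z = Δ)).card := by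
  obtain ⟨c, hc⟩ := exists_isEdgeColoring_deleteEdges_of_isCriticalEdge hclass2.le hcrit
  obtain ⟨ts, hf, hmax⟩ := exists_maximal_multifan (c := c) (hcrit.1 : G.Adj x y)
  have hdeg_y : G.degree y ≤ Δ := hΔ ▸ G.degree_le_maxDegree y
  calc Δ - G.degree y + 1 = Δ + 1 - G.degree y := by omega
    _ ≤ #(ts.toFinset.filter fun v => G.degree v = Δ) :=
      hf.add_one_sub_degree_le_card_filter hΔ.le (by omega) hc hmax
    _ ≤ _ := Finset.card_le_card fun v hv => by
      obtain ⟨hvts, hvΔ⟩ := Finset.mem_filter.1 hv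
      have hvts := List.mem_toFinset.1 hvts
      exact Finset.mem_filter.2 ⟨(G.mem_neighborFinset _ _).2 (hf.adj_of_mem (.tail y hvts)),
        fun h => hf.notMem_tail (h ▸ hvts), hvΔ⟩

/-- **Vizing's Adjacency Lemma.** Let `G` be a Class 2 graph with maximum
degree `Δ`. If `e = xy` is a critical edge of `G`, then `x` has at least `Δ - d_G(y) + 1`
neighbors of degree `Δ` in `V(G) \ {y}`. -/
theorem vizing_adjacency_lemma
    {V : Type*} [Fintype V] [DecidableEq V]
    (Δ : ℕ) (G : SimpleGraph V) [DecidableRel G.Adj]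
    (hΔ : G.maxDegree = Δ) (hclass2 : chromIndex G = Δ + 1)
    (x y : V) (hadj : G.Adj x y)
    (hcrit : IsCriticalEdge G (Sym2.mk x y)) :
    Δ - G.degree y + 1 ≤
      ((G.neighborFinset x).filter (fun z => z ≠ y ∧ G.degree z = Δ)).card :=
  vizing_adjacency_lemma_general Δ G hΔ hclass2 x y hcrit
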